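/- Let Q be positive definite, μ ∈ R^p, e the all-ones vector, and c > 0. Then the minimum value of f(α,β) = α²(μ'Qμ + c) - (2α-1)μ'Qμ + β²(e'Qe) - 2β(1-α)(e'Qμ) over (α,β) ∈ R² equals c·π₂/(π₂ + c), where π₂ = (μ - (e'Qμ/(e'Qe))e)'Q(μ - (e'Qμ/(e'Qe))e). -/

import Mathlib

open Matrix

noncomputable section

/-- Quadratic form `x' Q y`. -/
def qf {p : ℕ} (Q : Matrix (Fin p) (Fin p) ℝ) (x y : Fin p → ℝ) : ℝ := x ⬝ᵥ Q.mulVec y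

/-- The all-ones vector in `ℝ^p`. -/
def ones (p : ℕ) : Fin p → ℝ := fun _ => 1

/-! The objective is `(π₂ + c)(α - α*)² + e'Qe (β - β*(α))² + cπ₂/(π₂ + c)` once `μ'Qμ` is split,
Pythagoras-style, into `π₂` and the squared length `(e'Qμ)²/e'Qe` of its `Q`-projection onto `e`;
the minimum is attained at `α* = π₂/(π₂ + c)`, `β*(α) = (1 - α) e'Qμ/e'Qe`. -/

namespace qf

variable {p : ℕ} {Q : Matrix (Fin p) (Fin p) ℝ}

lemma comm (hQ : Q.IsSymm) (x y : Fin p → ℝ) : qf Q x y = qf Q y x := by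
  rw [qf, qf, dotProduct_mulVec, ← vecMul_transpose, hQ.eq, dotProduct_comm]

lemma sub_smul_sub_smul (x y : Fin p → ℝ) (t : ℝ) :
    qf Q (x - t • y) (x - t • y)
      = qf Q x x - t * qf Q x y - t * qf Q y x + t ^ 2 * qf Q y y := by
  simp only [qf, mulVec_sub, mulVec_smul, dotProduct_sub, sub_dotProduct, dotProduct_smul,
    smul_dotProduct, smul_eq_mul]
  ring

/-- Also true when `qf Q e e = 0`, since then the projection coefficient is `0` by `x / 0 = 0`. -/
lemma self_eq_residual_add (hQ : Q.IsSymm) (x e : Fin p → ℝ) :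
    qf Q x x = qf Q (x - (qf Q e x / qf Q e e) • e) (x - (qf Q e x / qf Q e e) • e)
      + qf Q e x ^ 2 / qf Q e e := by
  rw [sub_smul_sub_smul, comm hQ x e]
  rcases eq_or_ne (qf Q e e) 0 with hE | hE
  · simp [hE]
  · field_simp
    ring

lemma eq_zero_of_self_eq_zero (hQ : Q.PosDef) {e : Fin p → ℝ} (hE : qf Q e e = 0)
    (x : Fin p → ℝ) : qf Q e x = 0 := by
  by_contra hx
  have hne : e ≠ 0 := fun h => hx (by simp [qf, h])
  have hpos := hQ.dotProduct_mulVec_pos hne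
  rw [star_trivial] at hpos
  exact hpos.ne' hE

end qf

lemma objective_eq_sq_completion {m E s c π α β : ℝ} (hm : m = π + s ^ 2 / E)
    (hs : E = 0 → s = 0) (hπc : π + c ≠ 0) :
    α ^ 2 * (m + c) - (2 * α - 1) * m + β ^ 2 * E - 2 * β * (1 - α) * s
      = c * π / (π + c) + (π + c) * (α - π / (π + c)) ^ 2
        + E * (β - (1 - α) * s / E) ^ 2 := by
  subst hm
  rcases eq_or_ne E 0 with hE | hE
  · simp only [hE, hs hE]
    field_simp
    ring
  · field_simp
    ring

lemma isLeast_range_add_mul_sq_add_mul_sq {k a b : ℝ} (ha : 0 ≤ a) (hb : 0 ≤ b)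
    (α₀ : ℝ) (β₀ : ℝ → ℝ) :
    IsLeast (Set.range fun ab : ℝ × ℝ => k + a * (ab.1 - α₀) ^ 2 + b * (ab.2 - β₀ ab.1) ^ 2) k := by
  refine ⟨⟨(α₀, β₀ α₀), by simp⟩, ?_⟩
  rintro _ ⟨⟨α, β⟩, rfl⟩
  have := mul_nonneg ha (sq_nonneg (α - α₀))
  have := mul_nonneg hb (sq_nonneg (β - β₀ α))
  dsimp only
  linarith

theorem stmt1_general {p : ℕ} (Q : Matrix (Fin p) (Fin p) ℝ) (hQ : Q.PosDef)
    (μ : Fin p → ℝ) (c : ℝ) (hc : 0 < c)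
    (f : ℝ → ℝ → ℝ)
    (hf : ∀ α β : ℝ, f α β =
      α ^ 2 * (qf Q μ μ + c) - (2 * α - 1) * qf Q μ μ
        + β ^ 2 * qf Q (ones p) (ones p) - 2 * β * (1 - α) * qf Q (ones p) μ)
    (π₂ : ℝ)
    (hπ₂ : π₂ = qf Q (μ - (qf Q (ones p) μ / qf Q (ones p) (ones p)) • ones p)
        (μ - (qf Q (ones p) μ / qf Q (ones p) (ones p)) • ones p)) :
    IsLeast (Set.range fun ab : ℝ × ℝ => f ab.1 ab.2) (c * π₂ / (π₂ + c)) := by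
  have hsymm : Q.IsSymm := isHermitian_iff_isSymm.mp hQ.1
  have hm : qf Q μ μ = π₂ + qf Q (ones p) μ ^ 2 / qf Q (ones p) (ones p) := by
    rw [hπ₂]
    exact qf.self_eq_residual_add hsymm μ (ones p)
  have hπ₂c : 0 < π₂ + c := by
    have : 0 ≤ π₂ := hπ₂ ▸ hQ.posSemidef.dotProduct_mulVec_nonneg _
    linarith
  have hE : 0 ≤ qf Q (ones p) (ones p) := hQ.posSemidef.dotProduct_mulVec_nonneg _
  have hf' : (fun ab : ℝ × ℝ => f ab.1 ab.2) = fun ab => c * π₂ / (π₂ + c)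
      + (π₂ + c) * (ab.1 - π₂ / (π₂ + c)) ^ 2 + qf Q (ones p) (ones p)
        * (ab.2 - (1 - ab.1) * qf Q (ones p) μ / qf Q (ones p) (ones p)) ^ 2 := by
    funext ab
    rw [hf]
    exact objective_eq_sq_completion hm (qf.eq_zero_of_self_eq_zero hQ · μ) hπ₂c.ne'
  rw [hf']
  exact isLeast_range_add_mul_sq_add_mul_sq hπ₂c.le hE _
    fun α => (1 - α) * qf Q (ones p) μ / qf Q (ones p) (ones p)

theorem stmt1 {p : ℕ} (hp : 0 < p) (Q : Matrix (Fin p) (Fin p) ℝ) (hQ : Q.PosDef)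
    (μ : Fin p → ℝ) (c : ℝ) (hc : 0 < c)
    (f : ℝ → ℝ → ℝ)
    (hf : ∀ α β : ℝ, f α β =
      α ^ 2 * (qf Q μ μ + c) - (2 * α - 1) * qf Q μ μ
        + β ^ 2 * qf Q (ones p) (ones p) - 2 * β * (1 - α) * qf Q (ones p) μ)
    (π₂ : ℝ)
    (hπ₂ : π₂ = qf Q (μ - (qf Q (ones p) μ / qf Q (ones p) (ones p)) • ones p)
        (μ - (qf Q (ones p) μ / qf Q (ones p) (ones p)) • ones p)) :
    IsLeast (Set.range fun ab : ℝ × ℝ => f ab.1 ab.2) (c * π₂ / (π₂ + c)) :=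
  stmt1_general Q hQ μ c hc f hf π₂ hπ₂
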